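/- arXiv:1805.11251 — 8 statements merged into one kernel-verified Lean document; each statement's English description precedes it below -/
import Mathlib

section
/- Let $F : 2^{[d]} \to \mathbb{R}$ be monotone and normalized, let $S^*$ be a target set with $k^* = |S^*|$, and let $S_0 = \emptyset \subseteq S_1 \subseteq \dots \subseteq S_m$ be a chain of sets with $S_i = S_{i-1} \cup B_i$, $b_i = |B_i| \le k^*$. Suppose there are $\theta_1,\dots,\theta_m \in [0,1]$ such that for each $i$, $F(S_i) - F(S_{i-1}) \ge \theta_i \frac{b_i}{k^*}\,(F(S^*) - F(S_{i-1}))$. Then $F(S_m) \ge \left(1 - \prod_{i=1}^m \left(1 - \theta_i \frac{b_i}{k^*}\right)\right) F(S^*)$. -/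
theorem multi_stage_induction (d m kstar : ℕ) (F : Finset (Fin d) → ℝ)
    (hmono : ∀ A B : Finset (Fin d), A ⊆ B → F A ≤ F B) (hnorm : F ∅ = 0)
    (Sstar : Finset (Fin d)) (hk : Sstar.card = kstar) (hkpos : 0 < kstar)
    (S B : ℕ → Finset (Fin d)) (b : ℕ → ℕ) (θ : ℕ → ℝ)
    (hS0 : S 0 = ∅)
    (hSsucc : ∀ i, S (i + 1) = S i ∪ B i)
    (hbcard : ∀ i, (B i).card = b i)
    (hble : ∀ i, b i ≤ kstar)
    (hθ0 : ∀ i, 0 ≤ θ i) (hθ1 : ∀ i, θ i ≤ 1)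
    (hgain : ∀ i, F (S (i + 1)) - F (S i) ≥
      θ i * (b i / (kstar : ℝ)) * (F Sstar - F (S i))) :
    F (S m) ≥ (1 - ∏ i ∈ Finset.range m, (1 - θ i * (b i / (kstar : ℝ)))) * F Sstar := by
  have hFstar : 0 ≤ F Sstar := hnorm ▸ hmono ∅ Sstar (Finset.empty_subset _)
  have hc1 : ∀ i, θ i * ((b i : ℝ) / kstar) ≤ 1 := by
    intro i
    have hb : (b i : ℝ) / kstar ≤ 1 := by
      rw [div_le_one (by exact_mod_cast hkpos)]
      exact_mod_cast hble i
    have hb0 : 0 ≤ (b i : ℝ) / kstar := by positivity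
    calc θ i * ((b i : ℝ) / kstar) ≤ 1 * 1 :=
          mul_le_mul (hθ1 i) hb hb0 zero_le_one
      _ = 1 := by ring
  induction m with
  | zero => simp [hS0, hnorm]
  | succ n ih =>
    rw [Finset.prod_range_succ]
    have hc : θ n * ((b n : ℝ) / kstar) = θ n * ((b n : ℝ) / kstar) := rfl
    set c := θ n * ((b n : ℝ) / kstar) with hcdef
    have h1 : F (S (n + 1)) ≥ F (S n) + c * (F Sstar - F (S n)) := by
      have h := hgain n
      rw [show θ n * (↑(b n) / (kstar:ℝ)) = c from rfl] at h
      linarith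
    have h2 : (1 - c) * F (S n) ≥
        (1 - c) * ((1 - ∏ i ∈ Finset.range n, (1 - θ i * (b i / (kstar : ℝ)))) * F Sstar) :=
      mul_le_mul_of_nonneg_left ih (by linarith [hc1 n])
    nlinarith [h1, h2]
end

section
/- Under the hypotheses of the multi-stage induction lemma (monotone normalized $F$, chain $S_0 \subseteq \dots \subseteq S_m$ with marginal-gain lower bounds $F(S_i)-F(S_{i-1}) \ge \theta_i \frac{b_i}{k^*}(F(S^*)-F(S_{i-1}))$ with $\theta_i b_i/k^* \in [0,1]$), we have $F(S_m) \ge \left(1 - \exp\left(-\frac{1}{k^*}\sum_{i=1}^m \theta_i b_i\right)\right) F(S^*)$. -/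
theorem multi_stage_induction_exp (d m kstar : ℕ) (F : Finset (Fin d) → ℝ)
    (hmono : ∀ A B : Finset (Fin d), A ⊆ B → F A ≤ F B) (hnorm : F ∅ = 0)
    (Sstar : Finset (Fin d)) (hk : Sstar.card = kstar) (hkpos : 0 < kstar)
    (S B : ℕ → Finset (Fin d)) (b : ℕ → ℕ) (θ : ℕ → ℝ)
    (hS0 : S 0 = ∅)
    (hSsucc : ∀ i, S (i + 1) = S i ∪ B i)
    (hbcard : ∀ i, (B i).card = b i)
    (hble : ∀ i, b i ≤ kstar)
    (hθ0 : ∀ i, 0 ≤ θ i) (hθ1 : ∀ i, θ i ≤ 1)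
    (hgain : ∀ i, F (S (i + 1)) - F (S i) ≥
      θ i * (b i / (kstar : ℝ)) * (F Sstar - F (S i))) :
    F (S m) ≥
      (1 - Real.exp (-(1 / (kstar : ℝ)) * ∑ i ∈ Finset.range m, θ i * (b i : ℝ))) *
        F Sstar := by
  have hk0 : (0:ℝ) < (kstar:ℝ) := by exact_mod_cast hkpos
  have hFstar : 0 ≤ F Sstar := by
    have := hmono ∅ Sstar (Finset.empty_subset _); linarith [hnorm]
  have key : ∀ n, F Sstar - F (S n) ≤
      Real.exp (-(1 / (kstar : ℝ)) * ∑ i ∈ Finset.range n, θ i * (b i : ℝ)) * F Sstar := by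
    intro n
    induction n with
    | zero => simp [hS0, hnorm]
    | succ n ih =>
      set x := θ n * ((b n : ℝ) / kstar) with hx
      have hx0 : 0 ≤ x := by
        apply mul_nonneg (hθ0 n)
        positivity
      have hx1 : x ≤ 1 := by
        have hb : (b n : ℝ) / kstar ≤ 1 := by
          rw [div_le_one hk0]; exact_mod_cast hble n
        have hb0 : (0:ℝ) ≤ (b n : ℝ) / kstar := by positivity
        calc x ≤ 1 * ((b n : ℝ) / kstar) := by
                apply mul_le_mul_of_nonneg_right (hθ1 n) hb0
          _ ≤ 1 := by linarith
      have hstep : F Sstar - F (S (n + 1)) ≤ (1 - x) * (F Sstar - F (S n)) := by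
        have := hgain n; rw [← hx] at *; ring_nf; ring_nf at this ⊢; nlinarith
      have h1x : 1 - x ≤ Real.exp (-x) := by
        have := Real.add_one_le_exp (-x); linarith
      have hE : 0 ≤ Real.exp (-(1 / (kstar : ℝ)) * ∑ i ∈ Finset.range n, θ i * (b i : ℝ)) :=
        (Real.exp_pos _).le
      calc F Sstar - F (S (n + 1)) ≤ (1 - x) * (F Sstar - F (S n)) := hstep
        _ ≤ (1 - x) * (Real.exp (-(1 / (kstar : ℝ)) * ∑ i ∈ Finset.range n, θ i * (b i : ℝ)) * F Sstar) := by
            apply mul_le_mul_of_nonneg_left ih (by linarith)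
        _ ≤ Real.exp (-x) * (Real.exp (-(1 / (kstar : ℝ)) * ∑ i ∈ Finset.range n, θ i * (b i : ℝ)) * F Sstar) := by
            apply mul_le_mul_of_nonneg_right h1x (mul_nonneg hE hFstar)
        _ = Real.exp (-(1 / (kstar : ℝ)) * ∑ i ∈ Finset.range (n+1), θ i * (b i : ℝ)) * F Sstar := by
            rw [Finset.sum_range_succ, ← mul_assoc, ← Real.exp_add]
            congr 2
            rw [hx]
            field_simp
            ring
  have := key m
  nlinarith [this]
end

section
/- For all real numbers $x, y, z$ and $\ell \ge 1$ (an integer) satisfying $0 \le z \le 1$, $0 \le x \le y$, $x \le z$, and $y \le 1 + \frac{k - \ell}{\ell}$ for integers $k \ge \ell \ge 1$, it holds that $\frac{z - (z-x)\left(1 - \frac{1}{\ell}\right)^{\ell(y-x)}}{x(1-z) + yz} \ge \left(2 + \frac{k-\ell}{\ell}\right)^{-1}$, where the left-hand side is interpreted as $1$ when both numerator and denominator are $0$ (in particular one may assume $x(1-z)+yz > 0$). -/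
lemma pow_le_inv_one_add (ℓ : ℕ) (hℓ : 1 ≤ ℓ) (t : ℝ) (ht : 0 ≤ t) :
    (1 - 1 / (ℓ : ℝ)) ^ ((ℓ : ℝ) * t) ≤ 1 / (1 + t) := by
  have hℓpos : (0:ℝ) < ℓ := by exact_mod_cast hℓ
  have hb0 : (0:ℝ) ≤ 1 - 1/(ℓ:ℝ) := by
    have : 1/(ℓ:ℝ) ≤ 1 := by
      rw [div_le_one hℓpos]; exact_mod_cast hℓ
    linarith
  have hexp : Real.exp (-t) ≤ 1 / (1 + t) := by
    rw [Real.exp_neg, one_div]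
    exact inv_anti₀ (by linarith) (by linarith [Real.add_one_le_exp t])
  rcases eq_or_lt_of_le hb0 with hb | hb
  · rcases eq_or_lt_of_le ht with ht0 | ht0
    · rw [← ht0]; simp
    · rw [← hb, Real.zero_rpow (by positivity)]
      positivity
  · rw [Real.rpow_def_of_pos hb]
    refine le_trans (Real.exp_le_exp.mpr ?_) hexp
    have hlog : Real.log (1 - 1/(ℓ:ℝ)) ≤ -(1/(ℓ:ℝ)) := by
      have := Real.log_le_sub_one_of_pos hb
      linarith
    have hℓt : 0 ≤ (ℓ:ℝ) * t := by positivity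
    calc Real.log (1 - 1/(ℓ:ℝ)) * ((ℓ:ℝ)*t)
        ≤ (-(1/(ℓ:ℝ))) * ((ℓ:ℝ)*t) := mul_le_mul_of_nonneg_right hlog hℓt
      _ = -t := by field_simp
  
theorem hardness_core_inequality (k ℓ : ℕ) (hℓ : 1 ≤ ℓ) (hkℓ : ℓ ≤ k)
    (x y z : ℝ) (hz0 : 0 ≤ z) (hz1 : z ≤ 1) (hx0 : 0 ≤ x) (hxy : x ≤ y)
    (hxz : x ≤ z) (hy : y ≤ 1 + ((k : ℝ) - ℓ) / ℓ)
    (hden : 0 < x * (1 - z) + y * z) :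
    (2 + ((k : ℝ) - ℓ) / ℓ)⁻¹ ≤
      (z - (z - x) * (1 - 1 / (ℓ : ℝ)) ^ ((ℓ : ℝ) * (y - x))) /
        (x * (1 - z) + y * z) := by
  have ht : 0 ≤ y - x := by linarith
  have hp := pow_le_inv_one_add ℓ hℓ (y - x) ht
  have h1t : (0:ℝ) < 1 + (y - x) := by linarith
  have hzx : 0 ≤ z - x := by linarith
  have hN : (x*(1-z)+y*z)/(1+(y-x)) ≤
      z - (z - x) * (1 - 1 / (ℓ : ℝ)) ^ ((ℓ : ℝ) * (y - x)) := by
    have h1 : (z-x) * (1 - 1/(ℓ:ℝ))^((ℓ:ℝ)*(y-x)) ≤ (z-x) * (1/(1+(y-x))) :=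
      mul_le_mul_of_nonneg_left hp hzx
    have h2 : (x*(1-z)+y*z)/(1+(y-x)) = z - (z-x)*(1/(1+(y-x))) := by
      field_simp; ring
    rw [h2]; linarith
  rw [le_div_iff₀ hden]
  have h1 : (2 + ((k:ℝ)-ℓ)/ℓ)⁻¹ ≤ (1+(y-x))⁻¹ := by
    apply inv_anti₀ h1t
    linarith
  calc (2 + ((k:ℝ)-ℓ)/ℓ)⁻¹ * (x*(1-z)+y*z)
      ≤ (1+(y-x))⁻¹ * (x*(1-z)+y*z) := mul_le_mul_of_nonneg_right h1 hden.le
    _ = (x*(1-z)+y*z)/(1+(y-x)) := by ring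
    _ ≤ _ := hN
end

section
/- Let $F : 2^{[d]} \to \mathbb{R}$ be monotone and normalized, and for disjoint sets $L, S \subseteq [d]$, suppose the submodularity ratio inequality $\gamma \cdot (F(L \cup S) - F(L)) \le \sum_{j \in S}(F(L \cup \{j\}) - F(L))$ and the supermodularity ratio inequality $\sum_{j \in S}(F(L \cup \{j\}) - F(L)) \le \beta^{-1} (F(L \cup S) - F(L))$ hold with constants $\gamma, \beta \in (0,1]$, whenever $|S| \le d$. Fix a partial solution $S_{i-1}$ and an optimal set $S^*$ with $F(S_{i-1}) < F(S^*)$. If $j$ is chosen from $[d] \setminus S_{i-1}$ with probability proportional to $F(S_{i-1} \cup \{j\}) - F(S_{i-1})$ (assuming the total is positive), then the probability $p$ that $j \in S^*$ satisfies $p \ge \gamma\beta \cdot \frac{F(S^* \cup S_{i-1}) - F(S_{i-1})}{F([d]) - F(S_{i-1})}$. -/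
theorem fpt_probability_bound (d : ℕ) (F : Finset (Fin d) → ℝ) (γ β : ℝ)
    (hγ0 : 0 < γ) (hγ1 : γ ≤ 1) (hβ0 : 0 < β) (hβ1 : β ≤ 1)
    (hmono : ∀ A B : Finset (Fin d), A ⊆ B → F A ≤ F B) (hnorm : F ∅ = 0)
    (hsub : ∀ L S : Finset (Fin d), Disjoint L S →
      γ * (F (L ∪ S) - F L) ≤ ∑ j ∈ S, (F (insert j L) - F L))
    (hsup : ∀ L S : Finset (Fin d), Disjoint L S →
      ∑ j ∈ S, (F (insert j L) - F L) ≤ β⁻¹ * (F (L ∪ S) - F L))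
    (Sprev Sstar : Finset (Fin d)) (hlt : F Sprev < F Sstar)
    (htot : 0 < ∑ j ∈ Finset.univ \ Sprev, (F (insert j Sprev) - F Sprev)) :
    γ * β * ((F (Sstar ∪ Sprev) - F Sprev) / (F Finset.univ - F Sprev)) ≤
      (∑ j ∈ Sstar \ Sprev, (F (insert j Sprev) - F Sprev)) /
        (∑ j ∈ Finset.univ \ Sprev, (F (insert j Sprev) - F Sprev)) := by
  set N := ∑ j ∈ Sstar \ Sprev, (F (insert j Sprev) - F Sprev) with hN
  set D := ∑ j ∈ Finset.univ \ Sprev, (F (insert j Sprev) - F Sprev) with hD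
  have h1 := hsub Sprev (Sstar \ Sprev) Finset.sdiff_disjoint.symm
  have h2 := hsup Sprev (Finset.univ \ Sprev) Finset.sdiff_disjoint.symm
  rw [Finset.union_sdiff_self_eq_union] at h1 h2
  rw [Finset.union_eq_right.mpr (Finset.subset_univ _)] at h2
  rw [Finset.union_comm Sprev Sstar] at h1
  have hA : 0 < F (Sstar ∪ Sprev) - F Sprev := by
    have := hmono Sstar (Sstar ∪ Sprev) Finset.subset_union_left
    linarith
  have hβD : β * D ≤ F Finset.univ - F Sprev := by
    have := mul_le_mul_of_nonneg_left h2 hβ0.le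
    rwa [← mul_assoc, mul_inv_cancel₀ hβ0.ne', one_mul] at this
  have hB : 0 < F Finset.univ - F Sprev := lt_of_lt_of_le (by positivity) hβD
  rw [show γ * β * ((F (Sstar ∪ Sprev) - F Sprev) / (F Finset.univ - F Sprev)) = γ * β * (F (Sstar ∪ Sprev) - F Sprev) / (F Finset.univ - F Sprev) by ring, div_le_div_iff₀ hB htot]
  nlinarith [mul_le_mul_of_nonneg_right h1 htot.le,
    mul_le_mul_of_nonneg_left hβD (mul_pos hγ0 hA).le]
end

section
/- Let $f : \mathbb{R}^d \to \mathbb{R}$ be differentiable, and let $A, B \subseteq [d]$ be disjoint. Suppose $b^{(A)}$ maximizes $f$ over $\{x : \mathrm{supp}(x) \subseteq A\}$ and $b^{(A\cup B)}$ maximizes $f$ over $\{x : \mathrm{supp}(x) \subseteq A \cup B\}$. Suppose $f$ satisfies the restricted smoothness inequality $f(y) - f(x) - \langle \nabla f(x), y - x\rangle \ge -\frac{\nu}{2}\|y - x\|_2^2$ for all $x$ with $\mathrm{supp}(x) \subseteq A$ and $y$ with $\mathrm{supp}(y) \subseteq A\cup B$ and $\mathrm{supp}(y - x)\subseteq B$,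 where $\nu > 0$. Then $f(b^{(A\cup B)}) - f(b^{(A)}) \ge \frac{1}{2\nu} \|\nabla f(b^{(A)})_B\|_2^2$, where $\nabla f(b^{(A)})_B$ denotes the restriction of the gradient to coordinates in $B$. -/
open Finset

section QuadraticMinorant

variable {E : Type*} [NormedAddCommGroup E] [InnerProductSpace ℝ E]

/-- A step `y - x = ν⁻¹ • p` maximises the quadratic minorant `t ↦ t ‖p‖² - (ν / 2) t² ‖p‖²`
of `f (x + t • p) - f x`, which gives the gain `‖p‖² / (2ν)`. -/
theorem norm_sq_div_le_sub_of_quadratic_minorant {f : E → ℝ} {x y v p : E} {ν : ℝ}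
    (hν : 0 < ν) (hvp : inner ℝ v p = ‖p‖ ^ 2) (hyx : y - x = ν⁻¹ • p)
    (hf : f y - f x - inner ℝ v (y - x) ≥ -(ν / 2) * ‖y - x‖ ^ 2) :
    ‖p‖ ^ 2 / (2 * ν) ≤ f y - f x := by
  have hinner : inner ℝ v (y - x) = ‖p‖ ^ 2 / ν := by
    rw [hyx, real_inner_smul_right, hvp, inv_mul_eq_div]
  have hnorm : ‖y - x‖ ^ 2 = ‖p‖ ^ 2 / ν ^ 2 := by
    rw [hyx, norm_smul, mul_pow, norm_inv, Real.norm_of_nonneg hν.le, inv_pow, inv_mul_eq_div]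
  rw [hinner, hnorm] at hf
  calc ‖p‖ ^ 2 / (2 * ν) = ‖p‖ ^ 2 / ν - ν / 2 * (‖p‖ ^ 2 / ν ^ 2) := by
        field_simp; ring
    _ ≤ f y - f x := by linarith

end QuadraticMinorant

section CoordRestrict

variable {ι : Type*} [DecidableEq ι]

noncomputable def coordRestrict (B : Finset ι) (v : EuclideanSpace ℝ ι) : EuclideanSpace ℝ ι :=
  WithLp.toLp 2 fun i => if i ∈ B then v i else 0

theorem coordRestrict_apply_of_notMem {B : Finset ι} {i : ι} (hi : i ∉ B)
    (v : EuclideanSpace ℝ ι) : coordRestrict B v i = 0 := by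
  simp [coordRestrict, hi]

theorem inner_coordRestrict [Fintype ι] (B : Finset ι) (u v : EuclideanSpace ℝ ι) :
    inner ℝ u (coordRestrict B v) = ∑ i ∈ B, v i * u i := by
  simp [coordRestrict, PiLp.inner_apply, Finset.sum_ite_mem]

theorem norm_coordRestrict_sq [Fintype ι] (B : Finset ι) (v : EuclideanSpace ℝ ι) :
    ‖coordRestrict B v‖ ^ 2 = ∑ i ∈ B, v i ^ 2 := by
  rw [← real_inner_self_eq_norm_sq, inner_coordRestrict]
  exact sum_congr rfl fun i hi => by simp [coordRestrict, hi, sq]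

theorem inner_coordRestrict_self [Fintype ι] (B : Finset ι) (v : EuclideanSpace ℝ ι) :
    inner ℝ v (coordRestrict B v) = ‖coordRestrict B v‖ ^ 2 := by
  rw [norm_coordRestrict_sq, inner_coordRestrict]
  simp only [sq]

end CoordRestrict

theorem rsm_gradient_lower_bound_general (d : ℕ) (f : EuclideanSpace ℝ (Fin d) → ℝ)
    (g : EuclideanSpace ℝ (Fin d) → EuclideanSpace ℝ (Fin d))
    (A B : Finset (Fin d)) (ν : ℝ) (hν : 0 < ν)
    (bA bAB : EuclideanSpace ℝ (Fin d))
    (hbA_supp : ∀ i, i ∉ A → bA i = 0)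
    (hbAB_max : ∀ x : EuclideanSpace ℝ (Fin d),
      (∀ i, i ∉ A ∪ B → x i = 0) → f x ≤ f bAB)
    (hsmooth : ∀ x y : EuclideanSpace ℝ (Fin d),
      (∀ i, i ∉ A → x i = 0) → (∀ i, i ∉ A ∪ B → y i = 0) →
      (∀ i, i ∉ B → y i - x i = 0) →
      f y - f x - (inner ℝ (g x) (y - x) : ℝ) ≥ -(ν / 2) * ‖y - x‖ ^ 2) :
    (1 / (2 * ν)) * ∑ i ∈ B, (g bA i) ^ 2 ≤ f bAB - f bA := by
  set p := coordRestrict B (g bA)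
  set y := bA + ν⁻¹ • p
  have hyx : y - bA = ν⁻¹ • p := add_sub_cancel_left bA _
  have hyx_supp : ∀ i, i ∉ B → y i - bA i = 0 := fun i hi => by
    rw [← PiLp.sub_apply, hyx, PiLp.smul_apply, coordRestrict_apply_of_notMem hi, smul_zero]
  have hy_supp : ∀ i, i ∉ A ∪ B → y i = 0 := fun i hi => by
    rw [mem_union, not_or] at hi
    simpa [hbA_supp i hi.1] using hyx_supp i hi.2
  have hgain := norm_sq_div_le_sub_of_quadratic_minorant hν (inner_coordRestrict_self B (g bA))
    hyx (hsmooth bA y hbA_supp hy_supp hyx_supp)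
  rw [norm_coordRestrict_sq] at hgain
  calc 1 / (2 * ν) * ∑ i ∈ B, g bA i ^ 2 = (∑ i ∈ B, g bA i ^ 2) / (2 * ν) := one_div_mul_eq_div _ _
    _ ≤ f y - f bA := hgain
    _ ≤ f bAB - f bA := by linarith [hbAB_max y hy_supp]

theorem rsm_gradient_lower_bound (d : ℕ) (f : EuclideanSpace ℝ (Fin d) → ℝ)
    (g : EuclideanSpace ℝ (Fin d) → EuclideanSpace ℝ (Fin d))
    (hgrad : ∀ x, HasGradientAt f (g x) x)
    (A B : Finset (Fin d)) (hAB : Disjoint A B) (ν : ℝ) (hν : 0 < ν)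
    (bA bAB : EuclideanSpace ℝ (Fin d))
    (hbA_supp : ∀ i, i ∉ A → bA i = 0)
    (hbA_max : ∀ x : EuclideanSpace ℝ (Fin d), (∀ i, i ∉ A → x i = 0) → f x ≤ f bA)
    (hbAB_supp : ∀ i, i ∉ A ∪ B → bAB i = 0)
    (hbAB_max : ∀ x : EuclideanSpace ℝ (Fin d),
      (∀ i, i ∉ A ∪ B → x i = 0) → f x ≤ f bAB)
    (hsmooth : ∀ x y : EuclideanSpace ℝ (Fin d),
      (∀ i, i ∉ A → x i = 0) → (∀ i, i ∉ A ∪ B → y i = 0) →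
      (∀ i, i ∉ B → y i - x i = 0) →
      f y - f x - (inner ℝ (g x) (y - x) : ℝ) ≥ -(ν / 2) * ‖y - x‖ ^ 2) :
    (1 / (2 * ν)) * ∑ i ∈ B, (g bA i) ^ 2 ≤ f bAB - f bA :=
  rsm_gradient_lower_bound_general d f g A B ν hν bA bAB hbA_supp hbAB_max hsmooth
end

section
/- Let $f : \mathbb{R}^d \to \mathbb{R}$ be differentiable, and let $A, B \subseteq [d]$ be disjoint. Suppose $b^{(A)}$ maximizes $f$ over $\{x : \mathrm{supp}(x) \subseteq A\}$, $b^{(A\cup B)}$ maximizes $f$ over $\{x : \mathrm{supp}(x) \subseteq A\cup B\}$, and the first-order optimality condition $\nabla f(b^{(A)})_A = 0$ holds. Suppose $f$ satisfies the restricted strong concavity inequality $f(y) - f(x) - \langle\nabla f(x), y - x\rangle \le -\frac{\mu}{2}\|y - x\|_2^2$ for all $x, y$ with supports contained in $A \cup B$, where $\mu > 0$. Then $f(b^{(A\cup B)}) - f(b^{(A)}) \le \frac{1}{2\mu}\|\nabla f(b^{(A)})_B\|_2^2$. -/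
/-!
Restricted strong concavity at `x = b^(A)`, `y = b^(A ∪ B)` bounds the gain by
`⟪∇f(b^(A)), w⟫ - μ/2 ‖w‖²` with `w = b^(A ∪ B) - b^(A)` supported in `A ∪ B`. Maximising this
concave quadratic coordinatewise gives `‖∇f(b^(A))_{A ∪ B}‖² / (2μ)`, and the first-order condition
`∇f(b^(A))_A = 0` leaves only the coordinates in `B`.
-/

open Finset

lemma mul_sub_half_mul_sq_le {μ : ℝ} (hμ : 0 < μ) (a b : ℝ) :
    a * b - μ / 2 * b ^ 2 ≤ 1 / (2 * μ) * a ^ 2 := by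
  have hsq : 0 ≤ (a - μ * b) ^ 2 / (2 * μ) := by positivity
  have hexpand : (a - μ * b) ^ 2 / (2 * μ) = 1 / (2 * μ) * a ^ 2 - (a * b - μ / 2 * b ^ 2) := by
    field_simp
    ring
  linarith

lemma EuclideanSpace.inner_sub_half_mul_norm_sq_le {ι : Type*} [Fintype ι] {μ : ℝ} (hμ : 0 < μ)
    (v w : EuclideanSpace ℝ ι) {S : Finset ι} (hw : ∀ i ∉ S, w i = 0) :
    inner ℝ v w - μ / 2 * ‖w‖ ^ 2 ≤ 1 / (2 * μ) * ∑ i ∈ S, v i ^ 2 := by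
  have hsum : inner ℝ v w - μ / 2 * ‖w‖ ^ 2 = ∑ i ∈ S, (v i * w i - μ / 2 * w i ^ 2) := by
    rw [PiLp.inner_apply, EuclideanSpace.real_norm_sq_eq, mul_sum, ← sum_sub_distrib,
      ← sum_subset (subset_univ S) fun i _ hi => by simp [hw i hi]]
    simp only [RCLike.inner_apply, conj_trivial, mul_comm]
  rw [hsum, mul_sum]
  exact sum_le_sum fun i _ => mul_sub_half_mul_sq_le hμ (v i) (w i)

theorem rsc_gradient_upper_bound_general (d : ℕ) (f : EuclideanSpace ℝ (Fin d) → ℝ)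
    (g : EuclideanSpace ℝ (Fin d) → EuclideanSpace ℝ (Fin d))
    (A B : Finset (Fin d)) (μ : ℝ) (hμ : 0 < μ)
    (bA bAB : EuclideanSpace ℝ (Fin d))
    (hbA_supp : ∀ i, i ∉ A → bA i = 0)
    (hfoc : ∀ i ∈ A, g bA i = 0)
    (hbAB_supp : ∀ i, i ∉ A ∪ B → bAB i = 0)
    (hconc : ∀ x y : EuclideanSpace ℝ (Fin d),
      (∀ i, i ∉ A ∪ B → x i = 0) → (∀ i, i ∉ A ∪ B → y i = 0) →
      f y - f x - (inner ℝ (g x) (y - x) : ℝ) ≤ -(μ / 2) * ‖y - x‖ ^ 2) :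
    f bAB - f bA ≤ (1 / (2 * μ)) * ∑ i ∈ B, (g bA i) ^ 2 := by
  have hbA_supp' : ∀ i, i ∉ A ∪ B → bA i = 0 := fun i hi =>
    hbA_supp i fun hA => hi (mem_union_left B hA)
  have hstep_supp : ∀ i, i ∉ A ∪ B → (bAB - bA) i = 0 := fun i hi => by
    simp [hbAB_supp i hi, hbA_supp' i hi]
  have hgrad_B : ∑ i ∈ A ∪ B, g bA i ^ 2 = ∑ i ∈ B, g bA i ^ 2 := by
    refine (sum_subset subset_union_right fun i hi hiB => ?_).symm
    have hiA : i ∈ A := by simpa [hiB] using hi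
    simp [hfoc i hiA]
  calc f bAB - f bA ≤ inner ℝ (g bA) (bAB - bA) - μ / 2 * ‖bAB - bA‖ ^ 2 := by
        linarith [hconc bA bAB hbA_supp' hbAB_supp]
    _ ≤ 1 / (2 * μ) * ∑ i ∈ A ∪ B, g bA i ^ 2 :=
        EuclideanSpace.inner_sub_half_mul_norm_sq_le hμ _ _ hstep_supp
    _ = 1 / (2 * μ) * ∑ i ∈ B, g bA i ^ 2 := by rw [hgrad_B]

theorem rsc_gradient_upper_bound (d : ℕ) (f : EuclideanSpace ℝ (Fin d) → ℝ)
    (g : EuclideanSpace ℝ (Fin d) → EuclideanSpace ℝ (Fin d))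
    (hgrad : ∀ x, HasGradientAt f (g x) x)
    (A B : Finset (Fin d)) (hAB : Disjoint A B) (μ : ℝ) (hμ : 0 < μ)
    (bA bAB : EuclideanSpace ℝ (Fin d))
    (hbA_supp : ∀ i, i ∉ A → bA i = 0)
    (hbA_max : ∀ x : EuclideanSpace ℝ (Fin d), (∀ i, i ∉ A → x i = 0) → f x ≤ f bA)
    (hfoc : ∀ i ∈ A, g bA i = 0)
    (hbAB_supp : ∀ i, i ∉ A ∪ B → bAB i = 0)
    (hbAB_max : ∀ x : EuclideanSpace ℝ (Fin d),
      (∀ i, i ∉ A ∪ B → x i = 0) → f x ≤ f bAB)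
    (hconc : ∀ x y : EuclideanSpace ℝ (Fin d),
      (∀ i, i ∉ A ∪ B → x i = 0) → (∀ i, i ∉ A ∪ B → y i = 0) →
      f y - f x - (inner ℝ (g x) (y - x) : ℝ) ≤ -(μ / 2) * ‖y - x‖ ^ 2) :
    f bAB - f bA ≤ (1 / (2 * μ)) * ∑ i ∈ B, (g bA i) ^ 2 :=
  rsc_gradient_upper_bound_general d f g A B μ hμ bA bAB hbA_supp hfoc hbAB_supp hconc
end

section
/- Let $F : 2^{[d]} \to \mathbb{R}$ be monotone and normalized, $S^*$ a set with $|S^*| = k^*$, and suppose for every disjoint pair $L, S \subseteq [d]$ with $|S| \le \max(k^*, b_{\max})$ we have $\gamma(F(L\cup S)-F(L)) \le \sum_{j\in S}(F(L\cup\{j\})-F(L)) \le \beta^{-1}(F(L\cup S)-F(L))$ with $\gamma, \beta \in (0,1]$. Let $S_0 = \emptyset$ and for $i = 1,\dots,m$ let $B_i \subseteq [d]\setminus S_{i-1}$ be a set of size $b_i \le b_{\max} \le k^*$ maximizing $\sum_{j\in B}(F(S_{i-1}\cup\{j\})-F(S_{i-1}))$ over all $B \subseteq [d]\setminus S_{i-1}$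 with $|B| \le b_i$, and set $S_i = S_{i-1}\cup B_i$. If $\sum_{i=1}^m b_i = k$, then $F(S_m) \ge \left(1 - \exp\left(-\gamma\beta\frac{k}{k^*}\right)\right)F(S^*)$. -/
open Finset

lemma pick_subset {α : Type*} [DecidableEq α] (w : α → ℝ) :
    ∀ (c : ℕ) (T : Finset α), c ≤ T.card → (∀ j ∈ T, 0 ≤ w j) →
    ∃ B ⊆ T, B.card = c ∧ (c : ℝ) * ∑ j ∈ T, w j ≤ (T.card : ℝ) * ∑ j ∈ B, w j := by
  intro c
  induction c with
  | zero => intro T _ _; exact ⟨∅, empty_subset _, rfl, by simp⟩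
  | succ c ih =>
    intro T hc hw
    have hTne : T.Nonempty := card_pos.mp (by omega)
    obtain ⟨j, hj, hmax⟩ := T.exists_max_image w hTne
    have h1T : 1 ≤ T.card := by omega
    have hsumle : ∑ x ∈ T, w x ≤ (T.card : ℝ) * w j := by
      calc ∑ x ∈ T, w x ≤ ∑ _x ∈ T, w j := sum_le_sum (fun x hx => hmax x hx)
      _ = (T.card : ℝ) * w j := by rw [sum_const, nsmul_eq_mul]
    have hce : c ≤ (T.erase j).card := by rw [card_erase_of_mem hj]; omega
    obtain ⟨Bs, hBsub, hBcard, hBineq⟩ := ih (T.erase j) hce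
      (fun x hx => hw x (mem_of_mem_erase hx))
    have hjB : j ∉ Bs := fun h => (mem_erase.mp (hBsub h)).1 rfl
    refine ⟨insert j Bs, insert_subset hj (hBsub.trans (erase_subset _ _)), ?_, ?_⟩
    · rw [card_insert_of_notMem hjB, hBcard]
    · rw [sum_insert hjB]
      have hsplit : ∑ x ∈ T, w x = w j + ∑ x ∈ T.erase j, w x :=
        (Finset.add_sum_erase T w hj).symm
      have hcast : ((T.erase j).card : ℝ) = (T.card : ℝ) - 1 := by
        rw [card_erase_of_mem hj, Nat.cast_sub h1T]; norm_num
      rw [hcast] at hBineq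
      have hsB : 0 ≤ ∑ x ∈ Bs, w x :=
        sum_nonneg fun x hx => hw x (mem_of_mem_erase (hBsub hx))
      have hsE : 0 ≤ ∑ x ∈ T.erase j, w x :=
        sum_nonneg fun x hx => hw x (mem_of_mem_erase hx)
      have hwj : 0 ≤ w j := hw j hj
      have hn : (c : ℝ) + 1 ≤ (T.card : ℝ) := by exact_mod_cast hc
      rcases eq_or_lt_of_le hc with heq | hlt
      · -- T has exactly c+1 elements, so insert j Bs = T
        have hins : insert j Bs = T := by
          apply eq_of_subset_of_card_le
          · exact insert_subset hj (hBsub.trans (erase_subset _ _))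
          · rw [card_insert_of_notMem hjB, hBcard]; omega
        have heqsum : w j + ∑ x ∈ Bs, w x = ∑ x ∈ T, w x := by
          rw [← sum_insert hjB, hins]
        rw [← heq]
        push_cast
        rw [heqsum]
      · have hn' : (c : ℝ) + 1 < (T.card : ℝ) := by exact_mod_cast hlt
        rw [hsplit] at hsumle ⊢
        push_cast
        nlinarith [mul_le_mul_of_nonneg_right hBineq (by linarith : (0:ℝ) ≤ (T.card : ℝ)),
          mul_le_mul_of_nonneg_right hsumle (by linarith : (0:ℝ) ≤ (T.card : ℝ) - c - 1),
          mul_nonneg hsE (by linarith : (0:ℝ) ≤ (T.card : ℝ) - c - 1),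
          mul_nonneg hsB (by linarith : (0:ℝ) ≤ (T.card : ℝ))]

theorem multi_greedy_guarantee (d m kstar bmax k : ℕ) (F : Finset (Fin d) → ℝ)
    (γ β : ℝ) (hγ0 : 0 < γ) (hγ1 : γ ≤ 1) (hβ0 : 0 < β) (hβ1 : β ≤ 1)
    (hmono : ∀ A B : Finset (Fin d), A ⊆ B → F A ≤ F B) (hnorm : F ∅ = 0)
    (Sstar : Finset (Fin d)) (hkstar : Sstar.card = kstar) (hkpos : 0 < kstar)
    (hratio : ∀ L S : Finset (Fin d), Disjoint L S → S.card ≤ max kstar bmax →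
      γ * (F (L ∪ S) - F L) ≤ ∑ j ∈ S, (F (insert j L) - F L) ∧
        ∑ j ∈ S, (F (insert j L) - F L) ≤ β⁻¹ * (F (L ∪ S) - F L))
    (S B : ℕ → Finset (Fin d)) (b : ℕ → ℕ)
    (hS0 : S 0 = ∅)
    (hSsucc : ∀ i, S (i + 1) = S i ∪ B i)
    (hBdisj : ∀ i, Disjoint (B i) (S i))
    (hBcard : ∀ i, (B i).card = b i)
    (hble : ∀ i, b i ≤ bmax) (hbmax : bmax ≤ kstar)
    (hgreedy : ∀ i, ∀ B' : Finset (Fin d), Disjoint B' (S i) → B'.card ≤ b i →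
      ∑ j ∈ B', (F (insert j (S i)) - F (S i)) ≤
        ∑ j ∈ B i, (F (insert j (S i)) - F (S i)))
    (hsum : ∑ i ∈ Finset.range m, b i = k) :
    (1 - Real.exp (-(γ * β * (k : ℝ) / kstar))) * F Sstar ≤ F (S m) := by
  have hks : (0:ℝ) < kstar := by exact_mod_cast hkpos
  -- key per-step inequality
  have key : ∀ i, γ * β * (b i : ℝ) * (F Sstar - F (S i)) ≤
      (kstar : ℝ) * (F (S (i+1)) - F (S i)) := by
    intro i
    set L := S i with hL
    set Δ := fun j => F (insert j L) - F L with hΔ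
    have hΔnn : ∀ j, 0 ≤ Δ j := fun j =>
      sub_nonneg.mpr (hmono _ _ (subset_insert j L))
    set T := Sstar \ L with hT
    have hTd : Disjoint L T := disjoint_sdiff
    have hTcard : T.card ≤ kstar := hkstar ▸ card_le_card sdiff_subset
    have h1 := (hratio L T hTd (le_trans hTcard (le_max_left _ _))).1
    have hUnion : F Sstar ≤ F (L ∪ T) := by
      apply hmono
      rw [hT, union_sdiff_self_eq_union]
      exact subset_union_right
    have hTlow : γ * (F Sstar - F L) ≤ ∑ j ∈ T, Δ j := by
      calc γ * (F Sstar - F L) ≤ γ * (F (L ∪ T) - F L) := by nlinarith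
        _ ≤ ∑ j ∈ T, Δ j := h1
    have hTsnn : 0 ≤ ∑ j ∈ T, Δ j := sum_nonneg fun j _ => hΔnn j
    -- pick a good subset B' of T of size min (b i) T.card
    obtain ⟨B', hB'T, hB'card, hB'ineq⟩ :=
      pick_subset Δ (min (b i) T.card) T (min_le_right _ _) (fun j _ => hΔnn j)
    have hB'snn : 0 ≤ ∑ j ∈ B', Δ j := sum_nonneg fun j _ => hΔnn j
    have hget : (b i : ℝ) * ∑ j ∈ T, Δ j ≤ (kstar : ℝ) * ∑ j ∈ B', Δ j := by
      rcases le_or_gt (b i) T.card with hcase | hcase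
      · have hmin : min (b i) T.card = b i := min_eq_left hcase
        rw [hmin] at hB'ineq
        have : (T.card : ℝ) * ∑ j ∈ B', Δ j ≤ (kstar : ℝ) * ∑ j ∈ B', Δ j := by
          have : (T.card : ℝ) ≤ kstar := by exact_mod_cast hTcard
          nlinarith
        linarith
      · have hmin : min (b i) T.card = T.card := min_eq_right hcase.le
        have hB'eq : B' = T := eq_of_subset_of_card_le hB'T (by rw [hB'card, hmin])
        rw [hB'eq]
        have hbk : (b i : ℝ) ≤ kstar := by
          exact_mod_cast le_trans (hble i) hbmax
        nlinarith
    have hgr : ∑ j ∈ B', Δ j ≤ ∑ j ∈ B i, Δ j := by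
      apply hgreedy i B'
      · exact Finset.disjoint_of_subset_left hB'T (disjoint_sdiff_self_left)
      · rw [hB'card]; exact min_le_left _ _
    have hup := (hratio L (B i) (hBdisj i).symm
      (by rw [hBcard i]; exact le_trans (hble i) (le_max_right _ _))).2
    have hD : β * ∑ j ∈ B i, Δ j ≤ F (L ∪ B i) - F L := by
      have h := mul_le_mul_of_nonneg_left hup hβ0.le
      rw [← mul_assoc, mul_inv_cancel₀ hβ0.ne', one_mul] at h
      exact h
    rw [hSsucc i]
    have c1 := mul_le_mul_of_nonneg_left hTlow (by positivity : (0:ℝ) ≤ β * b i)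
    have c2 := mul_le_mul_of_nonneg_left hget hβ0.le
    have c3 := mul_le_mul_of_nonneg_left hgr (by positivity : (0:ℝ) ≤ β * kstar)
    have c4 := mul_le_mul_of_nonneg_left hD hks.le
    nlinarith [c1, c2, c3, c4]
  -- set a i
  set a : ℕ → ℝ := fun i => γ * β * (b i : ℝ) / kstar with ha
  have ha_nn : ∀ i, 0 ≤ a i := fun i => by positivity
  have ha_le1 : ∀ i, a i ≤ 1 := by
    intro i
    rw [ha]
    have hb : (b i : ℝ) ≤ kstar := by exact_mod_cast le_trans (hble i) hbmax
    rw [div_le_one hks]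
    have hγβ : γ * β ≤ 1 := by nlinarith
    have hbnn : (0:ℝ) ≤ (b i : ℝ) := Nat.cast_nonneg _
    nlinarith [mul_le_mul_of_nonneg_right hγβ hbnn]
  have hF0 : 0 ≤ F Sstar := hnorm ▸ hmono ∅ Sstar (empty_subset _)
  have main : ∀ n, F Sstar - F (S n) ≤
      (∏ i ∈ Finset.range n, (1 - a i)) * F Sstar := by
    intro n
    induction n with
    | zero => simp [hS0, hnorm]
    | succ n ihn =>
      have hk := key n
      have hstep : F Sstar - F (S (n+1)) ≤ (1 - a n) * (F Sstar - F (S n)) := by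
        have : a n * (F Sstar - F (S n)) ≤ F (S (n+1)) - F (S n) := by
          rw [ha]
          rw [div_mul_eq_mul_div, div_le_iff₀ hks] at *
          nlinarith
        nlinarith
      have hprodnn : 0 ≤ ∏ i ∈ Finset.range n, (1 - a i) :=
        Finset.prod_nonneg fun i _ => by linarith [ha_le1 i]
      calc F Sstar - F (S (n+1)) ≤ (1 - a n) * (F Sstar - F (S n)) := hstep
        _ ≤ (1 - a n) * ((∏ i ∈ Finset.range n, (1 - a i)) * F Sstar) := by
            apply mul_le_mul_of_nonneg_left ihn (by linarith [ha_le1 n])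
        _ = (∏ i ∈ Finset.range (n+1), (1 - a i)) * F Sstar := by
            rw [Finset.prod_range_succ]; ring
  have hprodexp : (∏ i ∈ Finset.range m, (1 - a i)) ≤
      Real.exp (-(γ * β * (k : ℝ) / kstar)) := by
    calc (∏ i ∈ Finset.range m, (1 - a i))
        ≤ ∏ i ∈ Finset.range m, Real.exp (-(a i)) := by
          apply Finset.prod_le_prod (fun i _ => by linarith [ha_le1 i])
          intro i _
          linarith [Real.add_one_le_exp (-(a i))]
      _ = Real.exp (∑ i ∈ Finset.range m, -(a i)) := (Real.exp_sum _ _).symm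
      _ = Real.exp (-(γ * β * (k : ℝ) / kstar)) := by
          congr 1
          have hform : ∀ i, -(a i) = (-(γ * β / kstar)) * (b i : ℝ) := by
            intro i; simp only [ha]; ring
          rw [Finset.sum_congr rfl (fun i _ => hform i), ← Finset.mul_sum, ← hsum]
          push_cast
          ring
  have := main m
  nlinarith [this, mul_le_mul_of_nonneg_right hprodexp hF0]
end

section
/- Consider the single-stage coverage instance with $d = 2k$ elements and universe $V = \{v_1,\dots,v_{2k}\}$ where $w_{v_j} = 1$ and $I_j = \{v_j\}$ for $j \le k$, and $w_{v_j} = \epsilon$ and $I_j = \{v_1, v_j\}$ for $k+1 \le j \le 2k$, with $F(S) = \sum_{v \in \bigcup_{j\in S} I_j} w_v$. For sufficiently small $\epsilon > 0$, the single-stage algorithm (choosing the $k$ elements maximizing $\sum_{j\in S} F(\{j\})$) selects $S = \{k+1,\dots,2k\}$ with $F(S) = 1 + k\epsilon$, while the optimum satisfies $F(\{1,\dots,k\}) = k + \epsilon \cdot 0 = k$; hence the approximation ratio of the single-stage algorithm on this instance is at most $\frac{1 + k\epsilon}{k}$, which is $O(1/d)$. -/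
theorem single_stage_bad_instance (k : ℕ) (hk : 0 < k) (ε : ℝ)
    (hε0 : 0 < ε) (hεk : ε < 1 / k)
    (w : Fin (2 * k) → ℝ) (I : Fin (2 * k) → Finset (Fin (2 * k)))
    (F : Finset (Fin (2 * k)) → ℝ)
    (hw : ∀ v : Fin (2 * k), w v = if v.val < k then 1 else ε)
    (hI : ∀ j : Fin (2 * k),
      I j = if j.val < k then {j} else {(⟨0, by omega⟩ : Fin (2 * k)), j})
    (hF : ∀ S : Finset (Fin (2 * k)), F S = ∑ v ∈ S.biUnion I, w v) :
    (∀ j : Fin (2 * k), F {j} = if j.val < k then 1 else 1 + ε) ∧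
      F (Finset.univ.filter fun j : Fin (2 * k) => k ≤ j.val) = 1 + k * ε ∧
      F (Finset.univ.filter fun j : Fin (2 * k) => j.val < k) = k := by
  have h2k : 0 < 2 * k := by omega
  have hzero : ((⟨0, h2k⟩ : Fin (2 * k)) : Fin (2 * k)).val < k := hk
  have hcardlt : (Finset.univ.filter fun j : Fin (2 * k) => j.val < k).card = k := by
    rw [Finset.card_filter, Fin.sum_univ_eq_sum_range (fun i => if i < k then 1 else 0),
      Finset.range_eq_Ico, ← Finset.sum_Ico_consecutive _ (Nat.zero_le k) (by omega)]
    rw [Finset.sum_ite_of_true (by intro i hi; simp at hi; omega),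
      Finset.sum_ite_of_false (by intro i hi; simp at hi; omega)]
    simp
  have hcardge : (Finset.univ.filter fun j : Fin (2 * k) => k ≤ j.val).card = k := by
    have := Finset.card_filter_add_card_filter_not
      (s := (Finset.univ : Finset (Fin (2 * k)))) (p := fun j => j.val < k)
    simp only [not_lt, Finset.card_univ, Fintype.card_fin, hcardlt] at this
    omega
  refine ⟨?_, ?_, ?_⟩
  · intro j
    rw [hF, Finset.singleton_biUnion, hI j]
    by_cases hj : j.val < k
    · rw [if_pos hj, if_pos hj, Finset.sum_singleton, hw, if_pos hj]
    · rw [if_neg hj, if_neg hj]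
      have hne : (⟨0, h2k⟩ : Fin (2 * k)) ≠ j := by
        intro h
        apply hj
        rw [← h]
        exact hk
      rw [Finset.sum_pair hne, hw, hw, if_pos hzero, if_neg hj]
  · rw [hF]
    have hset : ((Finset.univ.filter fun j : Fin (2 * k) => k ≤ j.val).biUnion I)
        = insert (⟨0, h2k⟩ : Fin (2 * k))
          (Finset.univ.filter fun j : Fin (2 * k) => k ≤ j.val) := by
      ext v
      simp only [Finset.mem_biUnion, Finset.mem_filter, Finset.mem_univ, true_and,
        Finset.mem_insert]
      constructor
      · rintro ⟨j, hj, hv⟩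
        rw [hI j, if_neg (by omega)] at hv
        simp only [Finset.mem_insert, Finset.mem_singleton] at hv
        rcases hv with h | h
        · exact Or.inl h
        · exact Or.inr (h ▸ hj)
      · rintro (h | h)
        · exact ⟨⟨k, by omega⟩, le_refl k, by rw [hI, if_neg (by simp)]; simp [h]⟩
        · exact ⟨v, h, by rw [hI, if_neg (by omega)]; simp⟩
    rw [hset, Finset.sum_insert (by simp [hk.le]; omega), hw, if_pos hzero]
    rw [Finset.sum_congr rfl (fun v hv => by
      rw [hw, if_neg]; simp at hv; omega)]
    rw [Finset.sum_const, hcardge, nsmul_eq_mul]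
  · rw [hF]
    have hset : ((Finset.univ.filter fun j : Fin (2 * k) => j.val < k).biUnion I)
        = Finset.univ.filter fun j : Fin (2 * k) => j.val < k := by
      ext v
      simp only [Finset.mem_biUnion, Finset.mem_filter, Finset.mem_univ, true_and]
      constructor
      · rintro ⟨j, hj, hv⟩
        rw [hI j, if_pos hj] at hv
        simp only [Finset.mem_singleton] at hv
        exact hv ▸ hj
      · intro h
        exact ⟨v, h, by rw [hI, if_pos h]; simp⟩
    rw [hset, Finset.sum_congr rfl (fun v hv => by
      rw [hw, if_pos]; simp at hv; exact hv)]
    rw [Finset.sum_const, hcardlt, nsmul_eq_mul, mul_one]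
end
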